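/- For $w \in S_+$, the transition matrix between Schubert polynomials and monomials is unitriangular with respect to reverse-lex order: $\mathfrak{S}_w = x^{c(w)} + (\text{reverse-lex lower terms})$, where $c(w)$ is the code of $w$ and $x^c > x^b$ in reverse-lex order means $b \ne c$ and $b_i < c_i$ for the maximal index $i$ with $b_i \ne c_i$. -/

import Mathlib

open MvPolynomial

/-- The group `S₊` of permutations of `ℕ` moving only finitely many elements
(the positive integers are relabeled `0, 1, 2, …`). -/
def SPlus : Subgroup (Equiv.Perm ℕ) where
  carrier := {w | {i : ℕ | w i ≠ i}.Finite}
  one_mem' := by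
    have h : {i : ℕ | (1 : Equiv.Perm ℕ) i ≠ i} = ∅ := by ext i; simp
    show ({i : ℕ | (1 : Equiv.Perm ℕ) i ≠ i}).Finite
    rw [h]; exact Set.finite_empty
  mul_mem' := by
    intro a b ha hb
    show ({i : ℕ | (a * b) i ≠ i}).Finite
    refine (Set.Finite.union ha hb).subset ?_
    intro j hj
    simp only [Set.mem_setOf_eq] at hj
    by_contra hc
    simp only [Set.mem_union, Set.mem_setOf_eq, not_or, not_not] at hc
    exact hj (by rw [Equiv.Perm.mul_apply, hc.2, hc.1])
  inv_mem' := by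
    intro a ha
    show ({i : ℕ | a⁻¹ i ≠ i}).Finite
    have h : {i : ℕ | a⁻¹ i ≠ i} = {i : ℕ | a i ≠ i} := by
      ext i
      simp only [Set.mem_setOf_eq, ne_eq, Equiv.Perm.inv_eq_iff_eq]
      exact not_congr eq_comm
    rw [h]; exact ha

/-- The simple transposition `s_i = (i, i+1)` as an element of `S₊`. -/
def sN (i : ℕ) : SPlus :=
  ⟨Equiv.swap i (i + 1), by
    show ({j : ℕ | Equiv.swap i (i + 1) j ≠ j}).Finite
    refine ((Set.finite_singleton (i + 1)).insert i).subset ?_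
    intro j hj
    simp only [Set.mem_setOf_eq] at hj
    by_contra hc
    simp only [Set.mem_insert_iff, Set.mem_singleton_iff, not_or] at hc
    exact hj (Equiv.swap_apply_of_ne_of_ne hc.1 hc.2)⟩

/-- Coxeter length = number of inversions. -/
noncomputable def lenS (w : SPlus) : ℕ :=
  Nat.card {p : ℕ × ℕ | p.1 < p.2 ∧ (w : Equiv.Perm ℕ) p.2 < (w : Equiv.Perm ℕ) p.1}

/-- The defining properties of the family of Schubert polynomials `𝔖_w`, `w ∈ S₊`:
`𝔖_id = 1`; `𝔖_w` is homogeneous of degree `ℓ(w)`; and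
`A_i 𝔖_w = 𝔖_{w sᵢ}` if `ℓ(w sᵢ) < ℓ(w)` and `A_i 𝔖_w = 0` otherwise, where the
divided difference relations are expressed via
`(x_i - x_{i+1}) 𝔖_{w sᵢ} = 𝔖_w - s_i 𝔖_w` resp. `s_i 𝔖_w = 𝔖_w`. -/
def SchubertFamily (S : SPlus → MvPolynomial ℕ ℚ) : Prop :=
  S 1 = 1 ∧
  (∀ w : SPlus, (S w).IsHomogeneous (lenS w)) ∧
  (∀ (w : SPlus) (i : ℕ),
    if lenS (w * sN i) < lenS w then
      (X i - X (i + 1)) * S (w * sN i)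
        = S w - rename (fun j => Equiv.swap i (i + 1) j) (S w)
    else rename (fun j => Equiv.swap i (i + 1) j) (S w) = S w)

/-- The code of `w`: `c(w)_i = #{j > i | w j < w i}`. -/
noncomputable def codeN (w : Equiv.Perm ℕ) : ℕ → ℕ :=
  fun i => Nat.card {j : ℕ | i < j ∧ w j < w i}

/-- `b` is smaller than `c` in reverse-lex order: at the largest index where
they differ, `b` is smaller. -/
def RevLexLt (b c : ℕ → ℕ) : Prop :=
  ∃ i, b i < c i ∧ ∀ j, i < j → b j = c j


/-!
Let `tailDegree t n` be the degree of the monomial `x^n` in the variables `x_t, x_{t+1}, …`.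
By induction on `ℓ(w)`, every monomial `x^n` of `𝔖_w` satisfies
`tailDegree t n ≤ tailDegree t c(w)` for all `t`, and `x^{c(w)}` has coefficient `1`; the first
fact, read at the largest index where `n` and `c(w)` differ, is reverse-lex dominance.

For the bound, coefficients of monomials of too large `t`-tail degree are invariant under every
`s_p` with `p ≥ t`: at an ascent `𝔖_w` is `s_p`-symmetric, and at a descent
`𝔖_w - s_p 𝔖_w = (x_p - x_{p+1}) 𝔖_{w s_p}` has smaller tail degrees by induction. Pushing the
last variable of such a monomial to the right would then give infinitely many monomials of `𝔖_w`.
For the coefficient, at a descent `i` we have `s_i c(w) = c(w s_i) + e_{i+1}`, and comparing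
coefficients of `x^{s_i c(w)}` in `𝔖_w - s_i 𝔖_w = (x_i - x_{i+1}) 𝔖_{w s_i}` leaves
`[x^{c(w)}] 𝔖_w = [x^{c(w s_i)}] 𝔖_{w s_i}`, the other two terms vanishing by the tail bounds.
-/

noncomputable def tailDegree (t : ℕ) : (ℕ →₀ ℕ) →+ ℕ :=
  Finsupp.weight fun j => if t ≤ j then 1 else 0

lemma tailDegree_single (t j r : ℕ) :
    tailDegree t (Finsupp.single j r) = if t ≤ j then r else 0 := by
  simp [tailDegree, Finsupp.weight_single]

lemma tailDegree_eq_apply_add (t : ℕ) (f : ℕ →₀ ℕ) :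
    tailDegree t f = f t + tailDegree (t + 1) f := by
  induction f using Finsupp.induction_linear with
  | zero => simp
  | add f g hf hg => simp only [map_add, Finsupp.add_apply, hf, hg]; ring
  | single j r =>
    simp only [tailDegree_single, Finsupp.single_apply]
    split_ifs <;> omega

lemma tailDegree_mapDomain {t : ℕ} {σ : ℕ → ℕ} (hσ : ∀ j, t ≤ σ j ↔ t ≤ j) (f : ℕ →₀ ℕ) :
    tailDegree t (Finsupp.mapDomain σ f) = tailDegree t f := by
  induction f using Finsupp.induction_linear with
  | zero => simp
  | add f g hf hg => rw [Finsupp.mapDomain_add, map_add, map_add, hf, hg]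
  | single j r => simp only [Finsupp.mapDomain_single, tailDegree_single, hσ]

lemma tailDegree_filter (t : ℕ) (f : ℕ →₀ ℕ) :
    tailDegree t (f.filter (t ≤ ·)) = tailDegree t f := by
  induction f using Finsupp.induction_linear with
  | zero => rw [Finsupp.filter_zero]
  | add f g hf hg => rw [Finsupp.filter_add, map_add, map_add, hf, hg]
  | single j r =>
    by_cases h : t ≤ j
    · rw [Finsupp.filter_single_of_pos _ h]
    · rw [Finsupp.filter_single_of_neg _ h, tailDegree_single, if_neg h, map_zero]

lemma tailDegree_congr {t : ℕ} {f g : ℕ →₀ ℕ} (h : ∀ j, t ≤ j → f j = g j) :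
    tailDegree t f = tailDegree t g := by
  rw [← tailDegree_filter, ← tailDegree_filter t g]
  congr 1
  ext j
  simp only [Finsupp.filter_apply]
  split_ifs with hj
  exacts [h j hj, rfl]

lemma eq_or_revLexLt_of_tailDegree_le {m c : ℕ →₀ ℕ}
    (h : ∀ t, tailDegree t m ≤ tailDegree t c) : m = c ∨ RevLexLt m c := by
  rcases (m.neLocus c).eq_empty_or_nonempty with hmc | hne
  · exact Or.inl (Finsupp.neLocus_eq_empty.mp hmc)
  right
  set i := (m.neLocus c).max' hne
  have hi : m i ≠ c i := Finsupp.mem_neLocus.mp ((m.neLocus c).max'_mem hne)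
  have habove : ∀ j, i < j → m j = c j := fun j hij => by
    by_contra hj
    exact absurd ((m.neLocus c).le_max' j (Finsupp.mem_neLocus.mpr hj)) (by omega)
  have hi_le : m i ≤ c i := by
    have := h i
    rw [tailDegree_eq_apply_add, tailDegree_eq_apply_add i c,
      tailDegree_congr (t := i + 1) fun j hj => habove j hj] at this
    omega
  exact ⟨i, lt_of_le_of_ne hi_le hi, habove⟩

lemma mapDomain_swap_add_single {α M : Type*} [DecidableEq α] [AddCommMonoid M] {a b : α}
    {f : α →₀ M} (ha : f a = 0) (hb : f b = 0) (v : M) :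
    Finsupp.mapDomain (Equiv.swap a b) (f + Finsupp.single a v) = f + Finsupp.single b v := by
  have hf : Finsupp.mapDomain (Equiv.swap a b) f = f := by
    ext j
    rw [Finsupp.mapDomain_equiv_apply, Equiv.symm_swap, Equiv.swap_apply_def]
    split_ifs with h1 h2
    · rw [h1, ha, hb]
    · rw [h2, ha, hb]
    · rfl
  rw [Finsupp.mapDomain_add, hf, Finsupp.mapDomain_single, Equiv.swap_apply_left]

section Polynomial

variable {R : Type*} [CommSemiring R]

lemma tailDegree_le_of_coeff_X_mul_ne_zero {p : MvPolynomial ℕ R} {t k : ℕ}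
    (hp : ∀ n, coeff n p ≠ 0 → tailDegree t n ≤ k) (q : ℕ) {n : ℕ →₀ ℕ}
    (hn : coeff n (X q * p) ≠ 0) : tailDegree t n ≤ k + tailDegree t (Finsupp.single q 1) := by
  classical
  rw [coeff_X_mul'] at hn
  split_ifs at hn with hq
  · have hsplit : n = (n - Finsupp.single q 1) + Finsupp.single q 1 := by
      rw [tsub_add_cancel_of_le]
      rwa [Finsupp.single_le_iff, Nat.one_le_iff_ne_zero, ← Finsupp.mem_support_iff]
    rw [hsplit, map_add]
    exact Nat.add_le_add_right (hp _ hn) _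
  · exact absurd rfl hn

lemma coeff_mapDomain_sub_rename {R : Type*} [CommRing R] {σ : ℕ ≃ ℕ} (f : MvPolynomial ℕ R)
    (n : ℕ →₀ ℕ) :
    coeff (Finsupp.mapDomain σ n) (f - rename σ f) =
      coeff (Finsupp.mapDomain σ n) f - coeff n f := by
  rw [coeff_sub, coeff_rename_mapDomain _ σ.injective]

lemma exists_last_of_tailDegree_pos {t : ℕ} {n : ℕ →₀ ℕ} (hn : 0 < tailDegree t n) :
    ∃ r, t ≤ r ∧ n r ≠ 0 ∧ ∀ j, r < j → n j = 0 := by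
  have hne : n.support.Nonempty := Finsupp.support_nonempty_iff.mpr (by rintro rfl; simp at hn)
  set r := n.support.max' hne
  have habove : ∀ j, r < j → n j = 0 := fun j hj =>
    by_contra fun h => absurd (n.support.le_max' j (Finsupp.mem_support_iff.mpr h)) (not_le.mpr hj)
  refine ⟨r, ?_, Finsupp.mem_support_iff.mp (n.support.max'_mem hne), habove⟩
  by_contra! h
  rw [tailDegree_congr (g := 0) fun j hj => habove j (by omega), map_zero] at hn
  exact lt_irrefl 0 hn

lemma tailDegree_le_of_coeff_swap {f : MvPolynomial ℕ R} {t k : ℕ}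
    (hswap : ∀ p, t ≤ p → ∀ n, k < tailDegree t n →
      coeff (Finsupp.mapDomain (Equiv.swap p (p + 1)) n) f = coeff n f)
    (n : ℕ →₀ ℕ) (hn : coeff n f ≠ 0) : tailDegree t n ≤ k := by
  by_contra! hk
  obtain ⟨r, hrt, hr, habove⟩ := exists_last_of_tailDegree_pos ((Nat.zero_le k).trans_lt hk)
  have herase : ∀ j, r ≤ j → n.erase r j = 0 := fun j hj => by
    rcases hj.eq_or_lt with rfl | hj
    · exact Finsupp.erase_same
    · rw [Finsupp.erase_ne hj.ne', habove j hj]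
  let g : ℕ → ℕ →₀ ℕ := fun i => n.erase r + Finsupp.single (r + i) (n r)
  have htail : ∀ i, tailDegree t (g i) = tailDegree t n := fun i => by
    conv_rhs => rw [← Finsupp.erase_add_single r n]
    simp only [g, map_add, tailDegree_single, if_pos hrt, if_pos (hrt.trans (Nat.le_add_right r i))]
  have hcoeff : ∀ i, coeff (g i) f = coeff n f := fun i => by
    induction i with
    | zero => simp only [g, Nat.add_zero, Finsupp.erase_add_single]
    | succ i ih =>
      have hstep : g (i + 1) = Finsupp.mapDomain (Equiv.swap (r + i) (r + i + 1)) (g i) :=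
        (mapDomain_swap_add_single (herase _ (by omega)) (herase (r + i + 1) (by omega)) _).symm
      rw [hstep, hswap (r + i) (by omega) (g i) (by rwa [htail]), ih]
  have hinj : Function.Injective g := fun i i' hii' => by
    by_contra hii
    have := congrArg (· (r + i)) hii'
    simp only [g, Finsupp.add_apply, herase _ (Nat.le_add_right r i), Finsupp.single_apply,
      if_neg (by omega : r + i' ≠ r + i), if_true, zero_add] at this
    exact hr this
  exact (Set.infinite_of_injective_forall_mem (s := (f.support : Set (ℕ →₀ ℕ))) hinj
    fun i => by simpa [hcoeff i] using hn) f.support.finite_toSet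

end Polynomial

open Equiv

lemma SPlus.exists_forall_ge_apply_eq (w : SPlus) : ∃ N, ∀ j, N ≤ j → (w : Perm ℕ) j = j := by
  obtain ⟨b, hb⟩ := (w.2 : {i : ℕ | (w : Perm ℕ) i ≠ i}.Finite).bddAbove
  exact ⟨b + 1, fun j hj => by_contra fun h => absurd (hb h) (by omega)⟩

lemma Equiv.Perm.apply_lt_of_forall_ge_apply_eq {w : Perm ℕ} {N : ℕ}
    (hN : ∀ j, N ≤ j → w j = j) {a : ℕ} (ha : a < N) : w a < N := by
  by_contra! h
  have : w a = a := w.injective (hN _ h)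
  omega

lemma Equiv.Perm.eq_one_of_strictMono {w : Perm ℕ} (hw : StrictMono w) : w = 1 := by
  ext a
  exact congrArg (· a)
    (Subsingleton.elim (hw.orderIsoOfSurjective w w.surjective) (OrderIso.refl ℕ))

lemma le_swap_apply_iff {t p : ℕ} (h : t ≠ p + 1) (j : ℕ) : t ≤ swap p (p + 1) j ↔ t ≤ j := by
  rw [swap_apply_def]
  split_ifs <;> omega

lemma coe_mul_sN (w : SPlus) (i : ℕ) :
    ((w * sN i : SPlus) : Perm ℕ) = (w : Perm ℕ) * swap i (i + 1) := rfl

lemma sN_mul_sN (i : ℕ) : sN i * sN i = 1 :=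
  Subtype.ext (swap_mul_self i (i + 1))

def inversions (w : Perm ℕ) : Set (ℕ × ℕ) := {p | p.1 < p.2 ∧ w p.2 < w p.1}

lemma lenS_eq_ncard (w : SPlus) : lenS w = (inversions w).ncard :=
  Nat.card_coe_set_eq _

lemma inversions_finite (w : SPlus) : (inversions w).Finite := by
  obtain ⟨N, hN⟩ := SPlus.exists_forall_ge_apply_eq w
  refine ((Set.finite_Iio N).prod
    ((Set.finite_Iio N).preimage (w : Perm ℕ).injective.injOn)).subset ?_
  rintro ⟨a, b⟩ ⟨hab, hw⟩
  have ha : a < N := by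
    by_contra! ha
    rw [hN a ha, hN b (by omega)] at hw
    omega
  exact ⟨ha, (hw.trans ((w : Perm ℕ).apply_lt_of_forall_ge_apply_eq hN ha) :)⟩

lemma inversions_mul_swap {w : Perm ℕ} {i : ℕ} (h : w (i + 1) < w i) :
    inversions (w * swap i (i + 1)) =
      Prod.map (swap i (i + 1)) (swap i (i + 1)) ⁻¹' (inversions w \ {(i, i + 1)}) := by
  ext ⟨a, b⟩
  simp only [inversions, Set.mem_ofPred_eq, Set.mem_preimage, Prod.map, Set.mem_sdiff,
    Set.mem_singleton_iff, Prod.mk.injEq, Perm.mul_apply]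
  constructor
  · rintro ⟨hab, hw⟩
    refine ⟨⟨?_, hw⟩, ?_⟩ <;> rw [swap_apply_def, swap_apply_def] at * <;> split_ifs at * <;>
      omega
  · rintro ⟨⟨hab, hw⟩, hne⟩
    refine ⟨?_, hw⟩
    rw [swap_apply_def, swap_apply_def] at *
    split_ifs at * <;> omega

lemma lenS_mul_sN_add_one {w : SPlus} {i : ℕ} (h : (w : Perm ℕ) (i + 1) < (w : Perm ℕ) i) :
    lenS (w * sN i) + 1 = lenS w := by
  have hσ : Function.Surjective (Prod.map (swap i (i + 1)) (swap i (i + 1))) :=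
    (swap i (i + 1)).surjective.prodMap (swap i (i + 1)).surjective
  rw [lenS_eq_ncard, lenS_eq_ncard, coe_mul_sN, inversions_mul_swap h,
    Set.ncard_preimage_of_injective_subset_range
      ((swap i (i + 1)).injective.prodMap (swap i (i + 1)).injective) (by simp [hσ.range_eq]),
    Set.ncard_sdiff_singleton_add_one
      (show (i, i + 1) ∈ inversions (w : Perm ℕ) from ⟨Nat.lt_succ_self i, h⟩)
      (inversions_finite w)]

lemma lenS_mul_sN_lt_iff (w : SPlus) (i : ℕ) :
    lenS (w * sN i) < lenS w ↔ (w : Perm ℕ) (i + 1) < (w : Perm ℕ) i := by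
  refine ⟨fun hlt => ?_, fun h => by have := lenS_mul_sN_add_one h; omega⟩
  by_contra! hle
  have hasc : (w : Perm ℕ) i < (w : Perm ℕ) (i + 1) :=
    hle.lt_of_ne ((w : Perm ℕ).injective.ne (by omega))
  have hdesc : ((w * sN i : SPlus) : Perm ℕ) (i + 1) < ((w * sN i : SPlus) : Perm ℕ) i := by
    rwa [coe_mul_sN, Perm.mul_apply, Perm.mul_apply, swap_apply_left, swap_apply_right]
  have := lenS_mul_sN_add_one hdesc
  rw [mul_assoc, sN_mul_sN, mul_one] at this
  omega

lemma codeN_eq_ncard (w : Perm ℕ) (i : ℕ) : codeN w i = {j | i < j ∧ w j < w i}.ncard :=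
  Nat.card_coe_set_eq _

lemma codeN_set_finite (w : Perm ℕ) (i : ℕ) : {j | i < j ∧ w j < w i}.Finite :=
  ((Set.finite_Iio (w i)).preimage w.injective.injOn).subset fun _ hj => hj.2

lemma codeN_succ_lt_of_descent {w : Perm ℕ} {i : ℕ} (h : w (i + 1) < w i) :
    codeN w (i + 1) < codeN w i := by
  rw [codeN_eq_ncard, codeN_eq_ncard]
  have hsub : {j | i + 1 < j ∧ w j < w (i + 1)} ⊆ {j | i < j ∧ w j < w i} :=
    fun j hj => ⟨Nat.lt_of_succ_lt hj.1, hj.2.trans h⟩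
  exact Set.ncard_lt_ncard ((Set.ssubset_iff_of_subset hsub).mpr
    ⟨i + 1, ⟨Nat.lt_succ_self i, h⟩, fun hi => lt_irrefl _ hi.1⟩) (codeN_set_finite w i)

lemma codeN_mul_swap (w : Perm ℕ) (i j : ℕ) :
    codeN (w * swap i (i + 1)) j =
      {k | j < swap i (i + 1) k ∧ w k < w (swap i (i + 1) j)}.ncard := by
  rw [codeN_eq_ncard, ← Set.ncard_image_of_injective _ (swap i (i + 1)).injective]
  congr 1
  ext k
  simp [Set.mem_image_equiv]

lemma codeN_mul_swap_add {w : Perm ℕ} {i : ℕ} (h : w (i + 1) < w i) (j : ℕ) :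
    codeN (w * swap i (i + 1)) j + (if j = i + 1 then 1 else 0) = codeN w (swap i (i + 1) j) := by
  rw [codeN_mul_swap, codeN_eq_ncard]
  split_ifs with hj
  · subst hj
    rw [swap_apply_right, ← Set.ncard_sdiff_singleton_add_one
      (show i + 1 ∈ {k | i < k ∧ w k < w i} from ⟨Nat.lt_succ_self i, h⟩) (codeN_set_finite w i)]
    congr 2
    ext k
    simp only [Set.mem_ofPred_eq, Set.mem_sdiff, Set.mem_singleton_iff, swap_apply_def]
    split_ifs <;> omega
  · rw [add_zero]
    congr 1
    ext k
    simp only [Set.mem_ofPred_eq, swap_apply_def]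
    split_ifs <;> subst_vars <;> omega

lemma codeN_eq_zero_of_forall_ge_apply_eq {w : Perm ℕ} {N : ℕ} (hN : ∀ j, N ≤ j → w j = j)
    {i : ℕ} (hi : N ≤ i) : codeN w i = 0 := by
  rw [codeN_eq_ncard, Set.ncard_eq_zero (codeN_set_finite w i)]
  ext j
  simp only [Set.mem_ofPred_eq, Set.mem_empty_iff_false, iff_false, not_and, not_lt]
  intro hij
  rw [hN i hi, hN j (by omega)]
  exact hij.le

noncomputable def codeF (w : SPlus) : ℕ →₀ ℕ :=
  Finsupp.ofSupportFinite (codeN w) <| by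
    obtain ⟨N, hN⟩ := SPlus.exists_forall_ge_apply_eq w
    exact (Set.finite_Iio N).subset fun i hi =>
      Set.mem_Iio.mpr (by_contra fun h => hi (codeN_eq_zero_of_forall_ge_apply_eq hN (not_lt.mp h)))

@[simp]
lemma coe_codeF (w : SPlus) : ⇑(codeF w) = codeN w :=
  Finsupp.ofSupportFinite_coe

lemma codeF_one : codeF 1 = 0 := by
  ext i
  simpa using codeN_eq_zero_of_forall_ge_apply_eq (w := 1) (fun _ _ => rfl) (Nat.zero_le i)

lemma mapDomain_swap_codeF {w : SPlus} {i : ℕ} (h : (w : Perm ℕ) (i + 1) < (w : Perm ℕ) i) :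
    Finsupp.mapDomain (swap i (i + 1)) (codeF w) = codeF (w * sN i) + Finsupp.single (i + 1) 1 := by
  ext j
  rw [Finsupp.mapDomain_equiv_apply, Finsupp.add_apply, Finsupp.single_apply, coe_codeF,
    coe_codeF, coe_mul_sN, symm_swap, ← codeN_mul_swap_add h j]
  simp only [eq_comm]

def TailDominated {R : Type*} [CommSemiring R] (f : MvPolynomial ℕ R) (c : ℕ →₀ ℕ) : Prop :=
  ∀ t n, coeff n f ≠ 0 → tailDegree t n ≤ tailDegree t c

namespace SchubertFamily

variable {S : SPlus → MvPolynomial ℕ ℚ}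

lemma rename_swap_of_ascent (hS : SchubertFamily S) {w : SPlus} {i : ℕ}
    (h : (w : Perm ℕ) i < (w : Perm ℕ) (i + 1)) : rename (swap i (i + 1)) (S w) = S w := by
  have hrel := hS.2.2 w i
  rwa [if_neg (by rw [lenS_mul_sN_lt_iff]; omega)] at hrel

lemma sub_rename_swap_of_descent (hS : SchubertFamily S) {w : SPlus} {i : ℕ}
    (h : (w : Perm ℕ) (i + 1) < (w : Perm ℕ) i) :
    S w - rename (swap i (i + 1)) (S w) = (X i - X (i + 1)) * S (w * sN i) := by
  have hrel := hS.2.2 w i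
  rw [if_pos ((lenS_mul_sN_lt_iff w i).mpr h)] at hrel
  exact hrel.symm

lemma tailDominated_of_descents (hS : SchubertFamily S) {w : SPlus}
    (ih : ∀ p, (w : Perm ℕ) (p + 1) < (w : Perm ℕ) p →
      TailDominated (S (w * sN p)) (codeF (w * sN p))) :
    TailDominated (S w) (codeF w) := by
  intro t
  refine tailDegree_le_of_coeff_swap fun p hp n hn => ?_
  rw [← sub_eq_zero, ← coeff_mapDomain_sub_rename]
  rcases ((w : Perm ℕ).injective.ne (by omega : p ≠ p + 1)).lt_or_gt with hasc | hdesc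
  · rw [hS.rename_swap_of_ascent hasc, sub_self, coeff_zero]
  have hσ := le_swap_apply_iff (t := t) (p := p) (by omega)
  have hcode : tailDegree t (codeF (w * sN p)) + 1 = tailDegree t (codeF w) := by
    rw [← tailDegree_mapDomain hσ (codeF w), mapDomain_swap_codeF hdesc, map_add,
      tailDegree_single, if_pos (by omega)]
  have hvanish : ∀ q, t ≤ q →
      coeff (Finsupp.mapDomain (swap p (p + 1)) n) (X q * S (w * sN p)) = 0 := fun q hq => by
    by_contra hne
    have := tailDegree_le_of_coeff_X_mul_ne_zero (ih p hdesc t) q hne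
    rw [tailDegree_mapDomain hσ, tailDegree_single, if_pos hq] at this
    omega
  rw [hS.sub_rename_swap_of_descent hdesc, sub_mul, coeff_sub, hvanish p hp,
    hvanish (p + 1) (by omega), sub_zero]

lemma coeff_codeF_of_descent (hS : SchubertFamily S) {w : SPlus} {i : ℕ}
    (h : (w : Perm ℕ) (i + 1) < (w : Perm ℕ) i) (hw : TailDominated (S w) (codeF w))
    (hws : TailDominated (S (w * sN i)) (codeF (w * sN i)))
    (hcoeff : coeff (codeF (w * sN i)) (S (w * sN i)) = 1) :
    coeff (codeF w) (S w) = 1 := by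
  set σc := Finsupp.mapDomain (swap i (i + 1)) (codeF w) with hσc_def
  have hσc : σc = codeF (w * sN i) + Finsupp.single (i + 1) 1 := mapDomain_swap_codeF h
  have hrel := congrArg (coeff σc) (hS.sub_rename_swap_of_descent h)
  rw [coeff_mapDomain_sub_rename, sub_mul, coeff_sub] at hrel
  have hw_zero : coeff σc (S w) = 0 := by
    by_contra hne
    have := hw (i + 1) σc hne
    rw [tailDegree_eq_apply_add, tailDegree_eq_apply_add (i + 1) (codeF w), hσc_def,
      tailDegree_mapDomain (le_swap_apply_iff (by omega)), Finsupp.mapDomain_equiv_apply,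
      symm_swap, swap_apply_right, coe_codeF] at this
    have := codeN_succ_lt_of_descent h
    omega
  have hXi_zero : coeff σc (X i * S (w * sN i)) = 0 := by
    by_contra hne
    have := tailDegree_le_of_coeff_X_mul_ne_zero (hws (i + 1)) i hne
    rw [hσc, map_add, tailDegree_single, tailDegree_single, if_pos le_rfl, if_neg (by omega)]
      at this
    omega
  have hXi1_one : coeff σc (X (i + 1) * S (w * sN i)) = 1 := by
    rw [hσc, add_comm, coeff_X_mul, hcoeff]
  rw [hw_zero, hXi_zero, hXi1_one] at hrel
  linear_combination -hrel

theorem tailDominated_and_coeff_codeF (hS : SchubertFamily S) (w : SPlus) :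
    TailDominated (S w) (codeF w) ∧ coeff (codeF w) (S w) = 1 := by
  induction h : lenS w using Nat.strong_induction_on generalizing w with
  | _ n ih =>
  have hlower : ∀ p, (w : Perm ℕ) (p + 1) < (w : Perm ℕ) p →
      TailDominated (S (w * sN p)) (codeF (w * sN p)) ∧
        coeff (codeF (w * sN p)) (S (w * sN p)) = 1 :=
    fun p hp => ih _ (h ▸ (lenS_mul_sN_lt_iff w p).mpr hp) _ rfl
  by_cases hdesc : ∃ i, (w : Perm ℕ) (i + 1) < (w : Perm ℕ) i
  · obtain ⟨i, hi⟩ := hdesc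
    have hdom := hS.tailDominated_of_descents fun p hp => (hlower p hp).1
    exact ⟨hdom, hS.coeff_codeF_of_descent hi hdom (hlower i hi).1 (hlower i hi).2⟩
  rw [not_exists] at hdesc
  obtain rfl : w = 1 := Subtype.ext <| Perm.eq_one_of_strictMono <| strictMono_nat_of_lt_succ
    fun i => (not_lt.mp (hdesc i)).lt_of_ne ((w : Perm ℕ).injective.ne (by omega))
  rw [hS.1, codeF_one]
  refine ⟨fun t m hm => ?_, coeff_zero_one⟩
  obtain rfl : m = 0 := by by_contra hm0; exact hm (by rw [coeff_one, if_neg (Ne.symm hm0)])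
  rfl

end SchubertFamily

/-- The transition matrix between Schubert polynomials and monomials is
unitriangular: `𝔖_w = x^{c(w)} +` reverse-lex lower terms. -/
theorem schubert_monomial_unitriangular
    (S : SPlus → MvPolynomial ℕ ℚ) (hS : SchubertFamily S) (w : SPlus) :
    (∀ m : ℕ →₀ ℕ, (∀ i, m i = codeN (w : Equiv.Perm ℕ) i) → coeff m (S w) = 1) ∧
    (∀ m : ℕ →₀ ℕ, coeff m (S w) ≠ 0 →
      (∀ i, m i = codeN (w : Equiv.Perm ℕ) i) ∨
        RevLexLt m (codeN (w : Equiv.Perm ℕ))) := by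
  obtain ⟨hdom, hcoeff⟩ := hS.tailDominated_and_coeff_codeF w
  refine ⟨fun m hm => ?_, fun m hm => ?_⟩
  · rwa [show m = codeF w from Finsupp.ext fun i => by simp [hm]]
  · rcases eq_or_revLexLt_of_tailDegree_le fun t => hdom t m hm with rfl | hlt
    · exact Or.inl fun i => by simp
    · exact Or.inr (by simpa using hlt)
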